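/- arXiv:1102.2101 — 3 statements merged into one kernel-verified Lean document; each statement's English description precedes it below -/
import Mathlib

section
/- For every real number α ∈ [0,2] and q ∈ [1,∞), define δ : [0,2] → [0,∞) by δ(ε) = ε^q if ε ∈ [0,α] and δ(ε) = q·α^(q-1)·ε − α^q·(q−1) if ε ∈ [α,2]. Then for all ε ∈ [0,2] we have δ(ε) ≥ (α/2)^(q−1) · ε^q. -/
/-! On `[0, α]` the bound holds because `(α/2)^(q-1) ≤ 1`. On `[α, 2]`, using
`α^q = α^(q-1) α`, the tangent line exceeds `α^(q-1) ε` by `(q-1) α^(q-1) (ε - α) ≥ 0`, while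
`(α/2)^(q-1) ε^q ≤ (α/ε)^(q-1) ε^q = α^(q-1) ε` because `ε ≤ 2`. -/

namespace Real

lemma rpow_sub_one_mul_self {x q : ℝ} (hx : 0 ≤ x) (hq : q ≠ 0) : x ^ (q - 1) * x = x ^ q := by
  rw [← rpow_add_one' hx (by simpa using hq), sub_add_cancel]

lemma rpow_sub_one_mul_le_tangent {α ε q : ℝ} (hα : 0 ≤ α) (hαε : α ≤ ε) (hq : 1 ≤ q) :
    α ^ (q - 1) * ε ≤ q * α ^ (q - 1) * ε - α ^ q * (q - 1) := by
  rw [← rpow_sub_one_mul_self (q := q) hα (by positivity)]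
  have : 0 ≤ (q - 1) * α ^ (q - 1) * (ε - α) :=
    mul_nonneg (mul_nonneg (by linarith) (rpow_nonneg hα _)) (by linarith)
  linarith

lemma div_two_rpow_mul_rpow_le_rpow {α ε q : ℝ} (hα : 0 ≤ α) (hα2 : α ≤ 2) (hq : 1 ≤ q)
    (hε : 0 ≤ ε) : (α / 2) ^ (q - 1) * ε ^ q ≤ ε ^ q :=
  mul_le_of_le_one_left (rpow_nonneg hε q)
    (rpow_le_one (by positivity) (by linarith) (by linarith))

lemma div_two_rpow_mul_rpow_le {α ε q : ℝ} (hα : 0 ≤ α) (hαε : α < ε) (hε2 : ε ≤ 2)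
    (hq : 1 ≤ q) : (α / 2) ^ (q - 1) * ε ^ q ≤ α ^ (q - 1) * ε := by
  have hε : 0 < ε := hα.trans_lt hαε
  calc (α / 2) ^ (q - 1) * ε ^ q
      ≤ (α / ε) ^ (q - 1) * ε ^ q := by gcongr
    _ = α ^ (q - 1) * ε := by
        rw [div_rpow hα hε.le, ← rpow_sub_one_mul_self (q := q) hε.le (by positivity)]
        field_simp

end Real

/-- For `α ∈ [0,2]`, `q ≥ 1`, the piecewise function `δ(ε) = ε^q` on `[0,α]` and
`δ(ε) = q·α^(q-1)·ε − α^q·(q−1)` on `[α,2]` satisfies `δ(ε) ≥ (α/2)^(q−1)·ε^q` on `[0,2]`. -/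
theorem stmt0 (α q : ℝ) (hα : α ∈ Set.Icc (0:ℝ) 2) (hq : 1 ≤ q)
    (δ : ℝ → ℝ)
    (hδ : ∀ ε ∈ Set.Icc (0:ℝ) 2,
      δ ε = if ε ≤ α then ε ^ q else q * α ^ (q - 1) * ε - α ^ q * (q - 1)) :
    ∀ ε ∈ Set.Icc (0:ℝ) 2, (α / 2) ^ (q - 1) * ε ^ q ≤ δ ε := by
  obtain ⟨hα0, hα2⟩ := hα
  intro ε hε
  rw [hδ ε hε]
  split_ifs with hεα
  · exact Real.div_two_rpow_mul_rpow_le_rpow hα0 hα2 hq hε.1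
  · push Not at hεα
    exact (Real.div_two_rpow_mul_rpow_le hα0 hεα hε.2 hq).trans
      (Real.rpow_sub_one_mul_le_tangent hα0 hεα.le hq)
end

section
/- Let h : [α,2] → ℝ be defined by h(ε) = q·α^(q−1)·ε − α^q·(q−1) − (α/2)^(q−1)·ε^q, where 0 ≤ α ≤ 2 and q ≥ 1. Then h is nondecreasing on [α,2] and h(α) ≥ 0; consequently h(ε) ≥ 0 for all ε ∈ [α,2]. -/
/-!
`q a^(q-1) ε - (q-1) a^q` is the tangent line of `ε ↦ ε^q` at `a`. The derivative of `h` is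
`q (a^(q-1) - (a ε / 2)^(q-1))`, which is nonnegative as long as `0 ≤ ε ≤ 2`, so `h` is monotone
there; and `h(a) = a^q (1 - (a/2)^(q-1)) ≥ 0` because `a/2 ≤ 1`.
-/

open Set

noncomputable def tangentGap (a q ε : ℝ) : ℝ :=
  q * a ^ (q - 1) * ε - a ^ q * (q - 1) - (a / 2) ^ (q - 1) * ε ^ q

lemma continuous_tangentGap (a : ℝ) {q : ℝ} (hq : 0 ≤ q) : Continuous (tangentGap a q) := by
  unfold tangentGap
  have := Real.continuous_rpow_const hq
  fun_prop

lemma hasDerivAt_tangentGap (a q : ℝ) {x : ℝ} (hx : x ≠ 0) :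
    HasDerivAt (tangentGap a q) (q * a ^ (q - 1) - (a / 2) ^ (q - 1) * (q * x ^ (q - 1))) x := by
  have hlin := ((hasDerivAt_id' x).const_mul (q * a ^ (q - 1))).sub_const (a ^ q * (q - 1))
  have hpow := (Real.hasDerivAt_rpow_const (p := q) (Or.inl hx)).const_mul ((a / 2) ^ (q - 1))
  rw [mul_one] at hlin
  exact hlin.sub hpow

lemma half_rpow_mul_rpow_le {a x q : ℝ} (ha : 0 ≤ a) (hx : x ∈ Icc (0 : ℝ) 2) (hq : 1 ≤ q) :
    (a / 2) ^ (q - 1) * x ^ (q - 1) ≤ a ^ (q - 1) := by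
  rw [← Real.mul_rpow (by positivity) hx.1]
  gcongr
  · exact mul_nonneg (by positivity) hx.1
  · nlinarith [hx.2]

lemma monotoneOn_tangentGap {a q : ℝ} (ha : 0 ≤ a) (hq : 1 ≤ q) :
    MonotoneOn (tangentGap a q) (Icc 0 2) := by
  have hderiv : ∀ x ∈ interior (Icc (0 : ℝ) 2), HasDerivAt (tangentGap a q)
      (q * a ^ (q - 1) - (a / 2) ^ (q - 1) * (q * x ^ (q - 1))) x := by
    rw [interior_Icc]
    exact fun x hx => hasDerivAt_tangentGap a q hx.1.ne'
  refine monotoneOn_of_deriv_nonneg (convex_Icc 0 2)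
    (continuous_tangentGap a (by linarith)).continuousOn
    (fun x hx => (hderiv x hx).differentiableAt.differentiableWithinAt) fun x hx => ?_
  rw [(hderiv x hx).deriv]
  rw [interior_Icc] at hx
  have hle := half_rpow_mul_rpow_le ha (Ioo_subset_Icc_self hx) hq
  nlinarith

lemma tangentGap_self_nonneg {a q : ℝ} (ha : a ∈ Icc (0 : ℝ) 2) (hq : 1 ≤ q) :
    0 ≤ tangentGap a q a := by
  have hpow : a ^ q = a ^ (q - 1) * a := by
    conv_lhs => rw [← sub_add_cancel q 1]
    rw [Real.rpow_add' ha.1 (by simp; linarith), Real.rpow_one]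
  have hself : tangentGap a q a = a ^ q * (1 - (a / 2) ^ (q - 1)) := by
    unfold tangentGap
    rw [hpow]
    ring
  have hle : (a / 2) ^ (q - 1) ≤ 1 :=
    Real.rpow_le_one (by linarith [ha.1]) (by linarith [ha.2]) (by linarith)
  rw [hself]
  exact mul_nonneg (Real.rpow_nonneg ha.1 q) (by linarith)

/-- The function `h(ε) = q·α^(q−1)·ε − α^q·(q−1) − (α/2)^(q−1)·ε^q` is nondecreasing on
`[α,2]`, satisfies `h(α) ≥ 0`, and hence is nonnegative on `[α,2]`. -/
theorem stmt1 (α q : ℝ) (hα : α ∈ Set.Icc (0:ℝ) 2) (hq : 1 ≤ q)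
    (h : ℝ → ℝ)
    (hh : ∀ ε : ℝ, h ε = q * α ^ (q - 1) * ε - α ^ q * (q - 1) - (α / 2) ^ (q - 1) * ε ^ q) :
    MonotoneOn h (Set.Icc α 2) ∧ 0 ≤ h α ∧ ∀ ε ∈ Set.Icc α 2, 0 ≤ h ε := by
  obtain rfl : h = tangentGap α q := funext hh
  have hmono : MonotoneOn (tangentGap α q) (Icc α 2) :=
    (monotoneOn_tangentGap hα.1 hq).mono (Icc_subset_Icc_left hα.1)
  have hself := tangentGap_self_nonneg hα hq
  exact ⟨hmono, hself, fun ε hε => hself.trans (hmono (left_mem_Icc.2 hα.2) hε hε.1)⟩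
end

section
/- Let L be the τ-pinball loss and Q a probability measure with support in [−1,1]. With t*_max the maximum of the τ-quantile set of Q and q_+ := Q((−∞,t*_max]) − τ, for all t ≥ 0 the excess inner risk satisfies C_Q(t*_max + t) − C*_Q = t·q_+ + ∫_0^t Q((t*_max, t*_max + s)) ds. -/
open MeasureTheory Set

/-- The τ-pinball loss. -/
noncomputable def pinball (τ y t : ℝ) : ℝ := if y < t then (1 - τ) * (t - y) else τ * (y - t)

/-- The τ-quantile set F*_τ(Q). -/
def quantileSet (Q : Measure ℝ) (τ : ℝ) : Set ℝ :=
  {t | τ ≤ (Q (Set.Iic t)).toReal ∧ 1 - τ ≤ (Q (Set.Ici t)).toReal}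

noncomputable def tqmin (Q : Measure ℝ) (τ : ℝ) : ℝ := sInf (quantileSet Q τ)
noncomputable def tqmax (Q : Measure ℝ) (τ : ℝ) : ℝ := sSup (quantileSet Q τ)

/-- The inner pinball risk C_Q(t). -/
noncomputable def innerRisk (Q : Measure ℝ) (τ t : ℝ) : ℝ := ∫ y, pinball τ y t ∂Q

/-- `Q` has a τ-quantile of type `q` with constants `α ∈ (0,2]` and `b > 0`. -/
noncomputable def quantileTypeQ (Q : Measure ℝ) (τ q α b : ℝ) : Prop :=
  (1 < q ∧ α ∈ Set.Ioc (0:ℝ) 2 ∧ 0 < b ∧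
    ∀ s ∈ Set.Icc (0:ℝ) α,
      b * s ^ (q - 1) ≤ (Q (Set.Ioo (tqmin Q τ - s) (tqmin Q τ))).toReal ∧
      b * s ^ (q - 1) ≤ (Q (Set.Ioo (tqmax Q τ) (tqmax Q τ + s))).toReal)
  ∨ (q = 1 ∧ α = 2 ∧ 0 < (Q {tqmin Q τ}).toReal ∧ 0 < (Q {tqmax Q τ}).toReal ∧
      b = (if tqmin Q τ ≠ tqmax Q τ
            then min (Q {tqmin Q τ}).toReal (Q {tqmax Q τ}).toReal
            else min (τ - (Q (Set.Iio (tqmin Q τ))).toReal)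
                     ((Q (Set.Iic (tqmax Q τ))).toReal - τ)))

open Filter Topology ProbabilityTheory

/-!
Off `t = y` the pinball loss has derivative `𝟙[y < t] - τ` in `t`, so the fundamental theorem of
calculus and Fubini give `C_Q(b) - C_Q(a) = ∫_a^b (Q(-∞, s) - τ) ds`. At the upper quantile
`m = t*_max` one has `Q(-∞, m) ≤ τ ≤ Q(-∞, m]`, so this integrand is nonpositive left of `m` and
nonnegative right of it, hence `C*_Q = C_Q(m)`. Splitting `Q(-∞, m + s) = Q(-∞, m] + Q(m, m + s)`
for `s > 0` then yields the formula.
-/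

lemma pinball_eq (τ y t : ℝ) : pinball τ y t = τ * (y - t) + max (t - y) 0 := by
  unfold pinball
  split_ifs with h
  · rw [max_eq_left (by linarith)]; ring
  · rw [max_eq_right (by linarith)]; ring

lemma continuous_pinball (τ y : ℝ) : Continuous (pinball τ y) := by
  rw [show pinball τ y = fun t => τ * (y - t) + max (t - y) 0 from funext (pinball_eq τ y)]
  fun_prop

lemma hasDerivAt_pinball {τ y t : ℝ} (h : t ≠ y) :
    HasDerivAt (pinball τ y) (if y < t then 1 - τ else -τ) t := by
  rcases h.lt_or_gt with h | h
  · have hloc : pinball τ y =ᶠ[𝓝 t] fun s => τ * (y - s) := by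
      filter_upwards [eventually_lt_nhds h] with s hs
      simp [pinball, hs.not_gt]
    rw [if_neg h.not_gt]
    exact HasDerivAt.congr_of_eventuallyEq
      (by simpa using ((hasDerivAt_id t).const_sub y).const_mul τ) hloc
  · have hloc : pinball τ y =ᶠ[𝓝 t] fun s => (1 - τ) * (s - y) := by
      filter_upwards [eventually_gt_nhds h] with s hs
      simp [pinball, hs]
    rw [if_pos h]
    exact HasDerivAt.congr_of_eventuallyEq
      (by simpa using ((hasDerivAt_id t).sub_const y).const_mul (1 - τ)) hloc

lemma integral_pinball_deriv (τ y a b : ℝ) :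
    ∫ s in a..b, (if y < s then 1 - τ else -τ) = pinball τ y b - pinball τ y a := by
  have hmono : Monotone fun s : ℝ => if y < s then 1 - τ else -τ := by
    intro s s' hss'
    dsimp only
    split_ifs <;> linarith
  exact integral_eq_of_hasDerivAt_off_countable _ _ (countable_singleton y)
    (continuous_pinball τ y).continuousOn
    (fun t ht => hasDerivAt_pinball (by simpa using ht.2)) hmono.intervalIntegrable

lemma integral_ite_lt {Q : Measure ℝ} [IsProbabilityMeasure Q] (τ s : ℝ) :
    ∫ y, (if y < s then 1 - τ else -τ) ∂Q = (Q (Iio s)).toReal - τ := by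
  have h : (fun y : ℝ => if y < s then 1 - τ else -τ)
      = fun y => (Iio s).indicator (fun _ => 1) y - τ := by
    ext y
    by_cases hy : y < s <;> simp [hy]
  rw [h, integral_sub ((integrable_const 1).indicator measurableSet_Iio) (integrable_const τ),
    integral_indicator_const _ measurableSet_Iio, integral_const, measureReal_def]
  simp

lemma integrable_pinball {Q : Measure ℝ} [IsFiniteMeasure Q] (hQ : Integrable id Q) (τ t : ℝ) :
    Integrable (fun y => pinball τ y t) Q := by
  simp_rw [pinball_eq]
  exact ((hQ.sub (integrable_const t)).const_mul τ).add ((integrable_const t).sub hQ).pos_part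

lemma integrable_id_of_ae_mem_Icc {Q : Measure ℝ} [IsFiniteMeasure Q] {a b : ℝ}
    (h : ∀ᵐ y ∂Q, y ∈ Icc a b) : Integrable id Q :=
  Integrable.of_bound measurable_id.aestronglyMeasurable (max |a| |b|) <| by
    filter_upwards [h] with y hy
    exact abs_le_max_abs_abs hy.1 hy.2

section innerRisk

variable {Q : Measure ℝ} [IsProbabilityMeasure Q]

lemma innerRisk_sub_innerRisk (hQ : Integrable id Q) (τ a b : ℝ) :
    innerRisk Q τ b - innerRisk Q τ a = ∫ s in a..b, ((Q (Iio s)).toReal - τ) := by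
  have hint : Integrable (Function.uncurry fun s y : ℝ => if y < s then 1 - τ else -τ)
      ((volume.restrict (uIoc a b)).prod Q) := by
    have : IsFiniteMeasure (volume.restrict (uIoc a b)) :=
      inferInstanceAs (IsFiniteMeasure (volume.restrict (Ioc _ _)))
    refine Integrable.of_bound ?_ (‖1 - τ‖ + ‖τ‖) (ae_of_all _ fun p => ?_)
    · exact (Measurable.ite (measurableSet_lt measurable_snd measurable_fst) measurable_const
        measurable_const).aestronglyMeasurable
    · dsimp only [Function.uncurry]
      split_ifs
      · exact le_add_of_nonneg_right (norm_nonneg τ)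
      · exact (norm_neg τ).trans_le (le_add_of_nonneg_left (norm_nonneg _))
  calc innerRisk Q τ b - innerRisk Q τ a = ∫ y, (pinball τ y b - pinball τ y a) ∂Q :=
        (integral_sub (integrable_pinball hQ τ b) (integrable_pinball hQ τ a)).symm
    _ = ∫ y, (∫ s in a..b, if y < s then 1 - τ else -τ) ∂Q := by
        simp_rw [integral_pinball_deriv]
    _ = ∫ s in a..b, ∫ y, (if y < s then 1 - τ else -τ) ∂Q :=
        (intervalIntegral_integral_swap hint).symm
    _ = ∫ s in a..b, ((Q (Iio s)).toReal - τ) := by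
        simp_rw [integral_ite_lt]

lemma innerRisk_add_sub_innerRisk (hQ : Integrable id Q) (τ m : ℝ) {t : ℝ} (ht : 0 ≤ t) :
    innerRisk Q τ (m + t) - innerRisk Q τ m
      = t * ((Q (Iic m)).toReal - τ) + ∫ s in (0:ℝ)..t, (Q (Ioo m (m + s))).toReal := by
  have hsplit : ∀ s ∈ Ioc 0 t, (Q (Iio (m + s))).toReal - τ
      = ((Q (Iic m)).toReal - τ) + (Q (Ioo m (m + s))).toReal := fun s hs => by
    rw [← Iic_union_Ioo_eq_Iio (lt_add_of_pos_right m hs.1),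
      measure_union ((Iic_disjoint_Ioi le_rfl).mono_right Ioo_subset_Ioi_self) measurableSet_Ioo,
      ENNReal.toReal_add (measure_ne_top _ _) (measure_ne_top _ _)]
    ring
  have hmono : Monotone fun s => (Q (Ioo m (m + s))).toReal := fun s s' hss' =>
    ENNReal.toReal_mono (measure_ne_top _ _) (measure_mono (Ioo_subset_Ioo_right (by linarith)))
  have hshift := intervalIntegral.integral_comp_add_left (fun s => (Q (Iio s)).toReal - τ) m
    (a := 0) (b := t)
  rw [add_zero] at hshift
  rw [innerRisk_sub_innerRisk hQ, ← hshift,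
    intervalIntegral.integral_congr_ae
      (ae_of_all _ fun s hs => hsplit s (by rwa [uIoc_of_le ht] at hs)),
    intervalIntegral.integral_add intervalIntegrable_const hmono.intervalIntegrable,
    intervalIntegral.integral_const, smul_eq_mul, sub_zero]

end innerRisk

lemma measure_Iio_toReal_le_of_isLUB {μ : Measure ℝ} [IsFiniteMeasure μ] {S : Set ℝ} {m c : ℝ}
    (hm : IsLUB S m) (hS : S.Nonempty) (hc : ∀ t ∈ S, (μ (Iio t)).toReal ≤ c) :
    (μ (Iio m)).toReal ≤ c := by
  obtain ⟨u, hu_mono, hu_le, hu_lim, hu_mem⟩ := hm.exists_seq_monotone_tendsto hS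
  have hunion : ⋃ n, Iio (u n) = Iio m := by
    ext x
    simp only [mem_iUnion, mem_Iio]
    exact ⟨fun ⟨n, hn⟩ => hn.trans_le (hu_le n),
      fun hx => (hu_lim.eventually (eventually_gt_nhds hx)).exists⟩
  have hlim := tendsto_measure_iUnion_atTop (μ := μ) fun _ _ hnk => Iio_subset_Iio (hu_mono hnk)
  rw [hunion] at hlim
  exact le_of_tendsto' ((ENNReal.tendsto_toReal (measure_ne_top _ _)).comp hlim)
    fun n => hc _ (hu_mem n)

section quantile

variable {Q : Measure ℝ} [IsProbabilityMeasure Q] {τ : ℝ}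

lemma mem_quantileSet_iff {t : ℝ} :
    t ∈ quantileSet Q τ ↔ τ ≤ (Q (Iic t)).toReal ∧ (Q (Iio t)).toReal ≤ τ := by
  rw [quantileSet, mem_ofPred_eq, ← compl_Iio, prob_compl_eq_one_sub measurableSet_Iio,
    ENNReal.toReal_sub_of_le prob_le_one ENNReal.one_ne_top, ENNReal.toReal_one,
    sub_le_sub_iff_left]

lemma bddAbove_setOf_measure_Iio_le (hτ : τ < 1) : BddAbove {v | (Q (Iio v)).toReal ≤ τ} := by
  obtain ⟨w, hw⟩ := ((tendsto_cdf_atTop Q).eventually (eventually_gt_nhds hτ)).exists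
  refine ⟨w, fun v hv => le_of_not_gt fun hwv => ?_⟩
  have : (Q (Iic w)).toReal ≤ (Q (Iio v)).toReal :=
    ENNReal.toReal_mono (measure_ne_top _ _) (measure_mono (Iic_subset_Iio.2 hwv))
  rw [cdf_eq_real, measureReal_def] at hw
  exact (hw.trans_le this).not_ge hv

lemma nonempty_setOf_measure_Iio_le (hτ : 0 < τ) : {v | (Q (Iio v)).toReal ≤ τ}.Nonempty := by
  obtain ⟨v, hv⟩ := ((tendsto_cdf_atBot Q).eventually (eventually_lt_nhds hτ)).exists
  refine ⟨v, le_trans ?_ hv.le⟩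
  rw [cdf_eq_real, measureReal_def]
  exact ENNReal.toReal_mono (measure_ne_top _ _) (measure_mono Iio_subset_Iic_self)

lemma sSup_setOf_measure_Iio_le_mem_quantileSet (hτ : τ ∈ Ioo (0:ℝ) 1) :
    sSup {v | (Q (Iio v)).toReal ≤ τ} ∈ quantileSet Q τ := by
  set A := {v | (Q (Iio v)).toReal ≤ τ}
  have hA : IsLUB A (sSup A) :=
    isLUB_csSup (nonempty_setOf_measure_Iio_le hτ.1) (bddAbove_setOf_measure_Iio_le hτ.2)
  refine mem_quantileSet_iff.2 ⟨?_, measure_Iio_toReal_le_of_isLUB hA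
    (nonempty_setOf_measure_Iio_le hτ.1) fun _ ht => ht⟩
  have hright : ∀ v ∈ Ioi (sSup A), τ ≤ cdf Q v := fun v hv => by
    have hvA : v ∉ A := fun h => (hv.trans_le (hA.1 h)).false
    rw [cdf_eq_real, measureReal_def]
    exact (not_le.1 hvA).le.trans
      (ENNReal.toReal_mono (measure_ne_top _ _) (measure_mono Iio_subset_Iic_self))
  rw [← measureReal_def, ← cdf_eq_real]
  exact ge_of_tendsto (((cdf Q).right_continuous _).mono Ioi_subset_Ici_self)
    (eventually_nhdsWithin_of_forall hright)

lemma tqmax_mem_quantileSet (hτ : τ ∈ Ioo (0:ℝ) 1) : tqmax Q τ ∈ quantileSet Q τ := by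
  have hsub : quantileSet Q τ ⊆ {v | (Q (Iio v)).toReal ≤ τ} := fun t ht =>
    (mem_quantileSet_iff.1 ht).2
  have hne : (quantileSet Q τ).Nonempty := ⟨_, sSup_setOf_measure_Iio_le_mem_quantileSet hτ⟩
  have hlub : IsLUB (quantileSet Q τ) (tqmax Q τ) :=
    isLUB_csSup hne ((bddAbove_setOf_measure_Iio_le hτ.2).mono hsub)
  obtain ⟨t, ht⟩ := hne
  refine mem_quantileSet_iff.2 ⟨?_, measure_Iio_toReal_le_of_isLUB hlub ⟨t, ht⟩ hsub⟩
  exact (mem_quantileSet_iff.1 ht).1.trans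
    (ENNReal.toReal_mono (measure_ne_top _ _) (measure_mono (Iic_subset_Iic.2 (hlub.1 ht))))

end quantile

section minimum

variable {Q : Measure ℝ} [IsProbabilityMeasure Q] {τ m : ℝ}

lemma innerRisk_le_of_mem_quantileSet (hQ : Integrable id Q) (hm : m ∈ quantileSet Q τ) (t : ℝ) :
    innerRisk Q τ m ≤ innerRisk Q τ t := by
  obtain ⟨hIic, hIio⟩ := mem_quantileSet_iff.1 hm
  rcases le_total t m with htm | hmt
  · have hneg : 0 ≤ ∫ s in t..m, -((Q (Iio s)).toReal - τ) :=
      intervalIntegral.integral_nonneg htm fun s hs => neg_nonneg.2 <| sub_nonpos.2 <|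
        (ENNReal.toReal_mono (measure_ne_top _ _) (measure_mono (Iio_subset_Iio hs.2))).trans hIio
    rw [intervalIntegral.integral_neg, ← innerRisk_sub_innerRisk hQ] at hneg
    linarith
  · have hdiff := innerRisk_add_sub_innerRisk hQ τ m (sub_nonneg.2 hmt)
    rw [add_sub_cancel] at hdiff
    have hint : 0 ≤ ∫ s in (0:ℝ)..t - m, (Q (Ioo m (m + s))).toReal :=
      intervalIntegral.integral_nonneg (sub_nonneg.2 hmt) fun _ _ => ENNReal.toReal_nonneg
    linarith [mul_nonneg (sub_nonneg.2 hmt) (sub_nonneg.2 hIic)]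

lemma iInf_innerRisk_eq (hQ : Integrable id Q) (hm : m ∈ quantileSet Q τ) :
    ⨅ t, innerRisk Q τ t = innerRisk Q τ m :=
  le_antisymm (ciInf_le ⟨_, forall_mem_range.2 (innerRisk_le_of_mem_quantileSet hQ hm)⟩ m)
    (le_ciInf (innerRisk_le_of_mem_quantileSet hQ hm))

end minimum

/-- Excess inner risk to the right of the quantile interval:
`C_Q(t*_max + t) − C*_Q = t·q₊ + ∫₀ᵗ Q((t*_max, t*_max+s)) ds` with
`q₊ = Q((−∞,t*_max]) − τ`. -/
theorem stmt7 (τ : ℝ) (hτ : τ ∈ Set.Ioo (0:ℝ) 1) (Q : Measure ℝ) [IsProbabilityMeasure Q]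
    (hsupp : Q (Set.Icc (-1:ℝ) 1)ᶜ = 0) :
    ∀ t : ℝ, 0 ≤ t →
      innerRisk Q τ (tqmax Q τ + t) - (⨅ s : ℝ, innerRisk Q τ s)
        = t * ((Q (Set.Iic (tqmax Q τ))).toReal - τ)
          + ∫ s in (0:ℝ)..t, (Q (Set.Ioo (tqmax Q τ) (tqmax Q τ + s))).toReal := by
  intro t ht
  have hQ : Integrable id Q := integrable_id_of_ae_mem_Icc (mem_ae_iff.2 hsupp)
  rw [iInf_innerRisk_eq hQ (tqmax_mem_quantileSet hτ), innerRisk_add_sub_innerRisk hQ τ _ ht]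
end
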